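/- Suppose the demographic parameters satisfy the uniform boundedness condition and the normed Lipschitz condition, and let (𝒮_t)_{t∈[0,T]} be a weakly continuous family of finite Borel measures on 𝕊 satisfying the weak limit equation. Then for every g : 𝕊 × [0,T] → ℝ which is continuous and has continuous partial derivatives in the age variable and in the time variable, and for every t ∈ [0,T], one has (g(·,t), 𝒮_t) = (g(·,0), 𝒮_0) + ∫₀ᵗ ( ∂_v g(·,u) + ∂_u g(·,u) − h_{𝒮_u} g(·,u) + Σ_{i∈Fin k} g((i,0),u) n^i_{𝒮_u} , 𝒮_u ) du, where ∂_v denotes the age derivative and ∂_u the time derivative. -/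

import Mathlib

open MeasureTheory Set Filter

namespace GeneralBranching2

/-- The type–age state space `𝕊 = Fin k × [0, ω]`. -/
abbrev SS (k : ℕ) (ω : ℝ) : Type := Fin k × (Icc (0:ℝ) ω)

/-- The age `0` as an element of `[0, ω]`. -/
def ageZero {ω : ℝ} (hω : 0 ≤ ω) : Icc (0:ℝ) ω := ⟨0, Set.left_mem_Icc.mpr hω⟩

/-- `f'` is the age derivative of `f : 𝕊 → ℝ` (derivative in the second, continuous
variable, taken within `[0, ω]`). -/
def IsAgeDeriv {k : ℕ} {ω : ℝ} (hω : 0 ≤ ω) (f f' : SS k ω → ℝ) : Prop :=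
  ∀ (i : Fin k) (v : Icc (0:ℝ) ω),
    HasDerivWithinAt (fun x : ℝ => f (i, projIcc 0 ω hω x)) (f' (i, v)) (Icc 0 ω) (v : ℝ)

/-- `‖μ − ν‖ = sup {|(f,μ) − (f,ν)| : f continuous, sup|f| ≤ 1}`. -/
noncomputable def measDist {α : Type*} [MeasurableSpace α] [TopologicalSpace α]
    (μ ν : Measure α) : ℝ :=
  ⨆ f : {f : α → ℝ // Continuous f ∧ ∀ s, |f s| ≤ 1},
    |(∫ s, f.1 s ∂μ) - ∫ s, f.1 s ∂ν|

/-- The operator `L_μ f = f' − h_μ f + Σ_{i} f(i,0) n^i_μ` (on `f ∈ C¹(𝕊)`, with given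
age derivative `f'`). -/
noncomputable def Lfull {k : ℕ} {ω : ℝ} (hω : 0 ≤ ω)
    (h : Measure (SS k ω) → SS k ω → ℝ)
    (n : Fin k → Measure (SS k ω) → SS k ω → ℝ)
    (μ : Measure (SS k ω)) (f f' : SS k ω → ℝ) (s : SS k ω) : ℝ :=
  f' s - h μ s * f s + ∑ i : Fin k, f (i, ageZero hω) * n i μ s

/-- The family `(S_t)_{t∈[0,T]}` is weakly continuous. -/
def WeaklyContinuous {k : ℕ} {ω : ℝ} (T : ℝ) (S : ℝ → Measure (SS k ω)) : Prop :=
  ∀ f : SS k ω → ℝ, Continuous f →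
    ContinuousOn (fun t => ∫ s, f s ∂(S t)) (Icc 0 T)

/-- `(S_t)_{t∈[0,T]}` satisfies the weak limit equation: for every `f ∈ C¹(𝕊)` and
`t ∈ [0,T]`, `u ↦ (L_{S_u} f, S_u)` is integrable on `[0,t]` and
`(f, S_t) = (f, S_0) + ∫₀ᵗ (L_{S_u} f, S_u) du`. -/
def WeakEq {k : ℕ} {ω : ℝ} (hω : 0 ≤ ω) (T : ℝ)
    (h : Measure (SS k ω) → SS k ω → ℝ)
    (n : Fin k → Measure (SS k ω) → SS k ω → ℝ)
    (S : ℝ → Measure (SS k ω)) : Prop :=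
  ∀ f f' : SS k ω → ℝ, Continuous f → Continuous f' → IsAgeDeriv hω f f' →
    ∀ t ∈ Icc (0:ℝ) T,
      IntervalIntegrable
        (fun u => ∫ s, Lfull hω h n (S u) f f' s ∂(S u)) volume 0 t ∧
      (∫ s, f s ∂(S t)) = (∫ s, f s ∂(S 0)) +
        ∫ u in (0:ℝ)..t, ∫ s, Lfull hω h n (S u) f f' s ∂(S u)

set_option maxHeartbeats 4000000

/-- If the demographic parameters satisfy the uniform boundedness and
normed Lipschitz conditions and `(S_t)` is a weakly continuous solution of the weak limit
equation, then the weak limit equation extends to time-dependent test functions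
`g ∈ C^{1,1}(𝕊 × [0,T])`:
`(g(·,t), S_t) = (g(·,0), S_0) + ∫₀ᵗ (∂_v g + ∂_u g − h_{S_u} g + Σ_i g((i,0),u) n^i_{S_u}, S_u) du`. -/
theorem weak_limit_equation_time_dependent_test_functions
    (k : ℕ) (hk : 1 ≤ k) (T ω : ℝ) (hT : 0 < T) (hω : 0 < ω)
    (h : Measure (SS k ω) → SS k ω → ℝ)
    (n : Fin k → Measure (SS k ω) → SS k ω → ℝ)
    (hmeas : ∀ μ, Measurable (h μ)) (nmeas : ∀ i μ, Measurable (n i μ))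
    -- uniform boundedness condition
    (C : ℝ) (hC : 0 ≤ C)
    (hbd : ∀ μ : Measure (SS k ω), IsFiniteMeasure μ → ∀ s, h μ s ∈ Icc (0:ℝ) C)
    (nbd : ∀ i, ∀ μ : Measure (SS k ω), IsFiniteMeasure μ → ∀ s, n i μ s ∈ Icc (0:ℝ) C)
    -- normed uniform Lipschitz condition
    (c : ℝ) (hc : 0 ≤ c)
    (hlip : ∀ μ ν : Measure (SS k ω), IsFiniteMeasure μ → IsFiniteMeasure ν →
      ∀ s, |h μ s - h ν s| ≤ c * measDist μ ν)
    (nlip : ∀ i, ∀ μ ν : Measure (SS k ω), IsFiniteMeasure μ → IsFiniteMeasure ν →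
      ∀ s, |n i μ s - n i ν s| ≤ c * measDist μ ν)
    -- the solution
    (S : ℝ → Measure (SS k ω))
    (hSfin : ∀ t, IsFiniteMeasure (S t))
    (hScont : WeaklyContinuous T S)
    (hSweak : WeakEq hω.le T h n S)
    -- a time-dependent test function `g ∈ C^{1,1}(𝕊 × [0,T])`, with age derivative `gv`
    -- and time derivative `gt`, all continuous
    (g gv gt : SS k ω → ℝ → ℝ)
    (hg_cont : ContinuousOn (fun p : SS k ω × ℝ => g p.1 p.2) (univ ×ˢ Icc 0 T))
    (hgv_cont : ContinuousOn (fun p : SS k ω × ℝ => gv p.1 p.2) (univ ×ˢ Icc 0 T))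
    (hgt_cont : ContinuousOn (fun p : SS k ω × ℝ => gt p.1 p.2) (univ ×ˢ Icc 0 T))
    (hgv : ∀ u ∈ Icc (0:ℝ) T, IsAgeDeriv hω.le (fun s => g s u) (fun s => gv s u))
    (hgt : ∀ s : SS k ω, ∀ u ∈ Icc (0:ℝ) T,
      HasDerivWithinAt (fun x : ℝ => g s x) (gt s u) (Icc 0 T) u) :
    ∀ t ∈ Icc (0:ℝ) T,
      (∫ s, g s t ∂(S t)) = (∫ s, g s 0 ∂(S 0)) +
        ∫ u in (0:ℝ)..t, ∫ s,
          (gv s u + gt s u - h (S u) s * g s u +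
            ∑ i : Fin k, g (i, ageZero hω.le) u * n i (S u) s) ∂(S u) := by
  intro t ht
  rcases eq_or_lt_of_le ht.1 with htz | ht0
  · simp [← htz]
  have htT : t ≤ T := ht.2
  haveI hSfin' : ∀ u : ℝ, IsFiniteMeasure (S u) := hSfin
  haveI : Nonempty (Fin k) := ⟨⟨0, hk⟩⟩
  haveI : Nonempty (Icc (0:ℝ) ω) := ⟨ageZero hω.le⟩
  -- integrability helper
  have int_bdd : ∀ (μ : Measure (SS k ω)), IsFiniteMeasure μ → ∀ (f : SS k ω → ℝ),
      AEStronglyMeasurable f μ → ∀ (B : ℝ), (∀ s, |f s| ≤ B) → Integrable f μ := by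
    intro μ hμ f hf B hB
    exact ⟨hf, HasFiniteIntegral.of_bounded (μ := μ) (f := f) (C := B)
      (ae_of_all _ (by simpa [Real.norm_eq_abs] using hB))⟩
  -- the extension of gt by projection
  set pr : ℝ → ℝ := fun u => ((projIcc (0:ℝ) T hT.le u : Icc (0:ℝ) T) : ℝ) with hpr
  have hpr_mem : ∀ u, pr u ∈ Icc (0:ℝ) T := fun u => (projIcc (0:ℝ) T hT.le u).2
  have hpr_eq : ∀ u ∈ Icc (0:ℝ) T, pr u = u := by
    intro u hu; simp [hpr, projIcc_of_mem hT.le hu]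
  have hpr_cont : Continuous pr := continuous_subtype_val.comp continuous_projIcc
  set gtE : SS k ω → ℝ → ℝ := fun s u => gt s (pr u) with hgtE
  have hgtE_cont : Continuous (fun p : SS k ω × ℝ => gtE p.1 p.2) := by
    have hc2 : Continuous (fun p : SS k ω × ℝ => (p.1, pr p.2)) :=
      continuous_fst.prodMk (hpr_cont.comp continuous_snd)
    exact hgt_cont.comp_continuous hc2 (fun p => ⟨mem_univ _, hpr_mem _⟩)
  have gtE_eq : ∀ s, ∀ u ∈ Icc (0:ℝ) T, gtE s u = gt s u := by
    intro s u hu; simp [hgtE, hpr_eq u hu]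
  -- sections
  have sec_g : ∀ r ∈ Icc (0:ℝ) T, Continuous (fun s => g s r) := by
    intro r hr
    exact hg_cont.comp_continuous (continuous_id.prodMk continuous_const)
      (fun s => ⟨mem_univ _, hr⟩)
  have sec_gv : ∀ r ∈ Icc (0:ℝ) T, Continuous (fun s => gv s r) := by
    intro r hr
    exact hgv_cont.comp_continuous (continuous_id.prodMk continuous_const)
      (fun s => ⟨mem_univ _, hr⟩)
  have sec_gtE : ∀ u, Continuous (fun s => gtE s u) :=
    fun u => hgtE_cont.comp (continuous_id.prodMk continuous_const)
  have sec_gtE' : ∀ s, Continuous (fun u => gtE s u) :=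
    fun s => hgtE_cont.comp (continuous_const.prodMk continuous_id)
  have time_g : ∀ s, ContinuousOn (fun u => g s u) (Icc (0:ℝ) T) := by
    intro s
    exact hg_cont.comp (continuous_const.prodMk continuous_id).continuousOn
      (fun u hu => ⟨mem_univ _, hu⟩)
  -- bounds
  have exists_bdd : ∀ (f : SS k ω → ℝ → ℝ),
      ContinuousOn (fun p : SS k ω × ℝ => f p.1 p.2) (univ ×ˢ Icc 0 T) →
      ∃ K, 0 ≤ K ∧ ∀ s, ∀ r ∈ Icc (0:ℝ) T, |f s r| ≤ K := by
    intro f hf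
    have hK : IsCompact ((univ : Set (SS k ω)) ×ˢ Icc (0:ℝ) T) :=
      isCompact_univ.prod isCompact_Icc
    have hne : ((univ : Set (SS k ω)) ×ˢ Icc (0:ℝ) T).Nonempty :=
      ⟨(Classical.arbitrary _, 0), ⟨mem_univ _, left_mem_Icc.mpr hT.le⟩⟩
    obtain ⟨p0, hp0, hmax⟩ := hK.exists_isMaxOn hne hf.abs
    exact ⟨|f p0.1 p0.2|, abs_nonneg _,
      fun s r hr => isMaxOn_iff.mp hmax (s, r) ⟨mem_univ _, hr⟩⟩
  obtain ⟨Kg, hKg0, hKg⟩ := exists_bdd g hg_cont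
  obtain ⟨Kv, hKv0, hKv⟩ := exists_bdd gv hgv_cont
  obtain ⟨Kt, hKt0, hKt⟩ := exists_bdd gt hgt_cont
  have hKtE : ∀ s u, |gtE s u| ≤ Kt := fun s u => hKt s (pr u) (hpr_mem u)
  -- mass bound
  obtain ⟨M, hM0, hM⟩ : ∃ M, 0 ≤ M ∧ ∀ u ∈ Icc (0:ℝ) T, ((S u) univ).toReal ≤ M := by
    have h1 : ContinuousOn (fun u : ℝ => ∫ _s, (1:ℝ) ∂ S u) (Icc 0 T) :=
      hScont _ continuous_const
    have h1' : ContinuousOn (fun u : ℝ => ((S u) univ).toReal) (Icc 0 T) := by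
      have he : (fun u : ℝ => ∫ _s, (1:ℝ) ∂ S u) = fun u => ((S u) univ).toReal := by
        funext u; simp [integral_const, Measure.real]
      rwa [he] at h1
    obtain ⟨u0, _hu0, hmax⟩ := isCompact_Icc.exists_isMaxOn
      ⟨0, left_mem_Icc.mpr hT.le⟩ h1'
    exact ⟨max 0 (((S u0) univ).toReal), le_max_left _ _,
      fun u hu => le_trans (isMaxOn_iff.mp hmax u hu) (le_max_right _ _)⟩
  -- uniform continuity in the time variable
  have unif : ∀ (f : SS k ω → ℝ → ℝ),
      ContinuousOn (fun p : SS k ω × ℝ => f p.1 p.2) (univ ×ˢ Icc 0 T) →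
      ∀ ε > (0:ℝ), ∃ δ > (0:ℝ), ∀ s, ∀ u ∈ Icc (0:ℝ) T, ∀ v ∈ Icc (0:ℝ) T,
        |u - v| < δ → |f s u - f s v| < ε := by
    intro f hf ε hε
    have H : ∀ i : Fin k, ∃ δ > (0:ℝ), ∀ (w : Icc (0:ℝ) ω), ∀ u ∈ Icc (0:ℝ) T,
        ∀ v ∈ Icc (0:ℝ) T, |u - v| < δ → |f (i, w) u - f (i, w) v| < ε := by
      intro i
      have hKc : IsCompact ((univ : Set (Icc (0:ℝ) ω)) ×ˢ Icc (0:ℝ) T) :=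
        isCompact_univ.prod isCompact_Icc
      have hcont : ContinuousOn (fun q : Icc (0:ℝ) ω × ℝ => f (i, q.1) q.2)
          ((univ : Set (Icc (0:ℝ) ω)) ×ˢ Icc (0:ℝ) T) := by
        have hm : Continuous (fun q : Icc (0:ℝ) ω × ℝ => (((i, q.1) : SS k ω), q.2)) :=
          ((continuous_const.prodMk continuous_fst).prodMk continuous_snd)
        exact hf.comp hm.continuousOn (fun q hq => ⟨mem_univ _, hq.2⟩)
      have huc : UniformContinuousOn (fun q : Icc (0:ℝ) ω × ℝ => f (i, q.1) q.2)
          ((univ : Set (Icc (0:ℝ) ω)) ×ˢ Icc (0:ℝ) T) :=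
        hKc.uniformContinuousOn_of_continuous hcont
      rw [Metric.uniformContinuousOn_iff] at huc
      obtain ⟨δ, hδ0, hδ⟩ := huc ε hε
      refine ⟨δ, hδ0, fun w u hu v hv huv => ?_⟩
      have hd : dist ((w, u) : Icc (0:ℝ) ω × ℝ) (w, v) < δ := by
        rw [Prod.dist_eq]
        simp only [dist_self, Real.dist_eq]
        exact max_lt hδ0 huv
      have h2 := hδ (w, u) ⟨mem_univ _, hu⟩ (w, v) ⟨mem_univ _, hv⟩ hd
      simpa [Real.dist_eq] using h2
    choose δf hδf0 hδf using H
    refine ⟨Finset.univ.inf' ⟨⟨0, hk⟩, Finset.mem_univ _⟩ δf, ?_, ?_⟩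
    · show (0:ℝ) < Finset.univ.inf' ⟨⟨0, hk⟩, Finset.mem_univ _⟩ δf
      refine (Finset.lt_inf'_iff _).mpr ?_
      exact fun i _ => hδf0 i
    · rintro ⟨i, w⟩ u hu v hv huv
      exact hδf i w u hu v hv
        (lt_of_lt_of_le huv (Finset.inf'_le _ (Finset.mem_univ i)))
  -- the functions
  set ψ : ℝ → ℝ → ℝ := fun r u =>
    ∫ s, Lfull hω.le h n (S u) (fun s => g s r) (fun s => gv s r) s ∂ S u with hψdef
  set P : ℝ → ℝ := fun u =>
    ∫ s, Lfull hω.le h n (S u) (fun s => g s u) (fun s => gv s u) s ∂ S u with hPdef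
  set Q : ℝ → ℝ := fun u => ∫ s, gtE s u ∂ S u with hQdef
  set p : ℝ → ℝ → ℝ := fun r u => ∫ s, gtE s u ∂ S r with hpdef
  set φ : ℝ → ℝ := fun r => ∫ s, g s r ∂ S r with hφdef
  -- weak equation facts
  have hweak : ∀ r ∈ Icc (0:ℝ) T, ∀ b ∈ Icc (0:ℝ) T,
      IntervalIntegrable (ψ r) volume 0 b ∧
      (∫ s, g s r ∂ S b) = (∫ s, g s r ∂ S 0) + ∫ u in (0:ℝ)..b, ψ r u := by
    intro r hr b hb
    exact hSweak (fun s => g s r) (fun s => gv s r) (sec_g r hr) (sec_gv r hr) (hgv r hr) b hb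
  have ψint : ∀ r ∈ Icc (0:ℝ) T, IntegrableOn (ψ r) (Ioc 0 T) volume := by
    intro r hr
    have h2 := (hweak r hr T ⟨hT.le, le_refl T⟩).1
    rwa [intervalIntegrable_iff, uIoc_of_le hT.le] at h2
  have incr : ∀ r ∈ Icc (0:ℝ) T, ∀ a b : ℝ, 0 ≤ a → a ≤ b → b ≤ T →
      (∫ s, g s r ∂ S b) - (∫ s, g s r ∂ S a) = ∫ u in a..b, ψ r u := by
    intro r hr a b ha hab hbT
    have hb := (hweak r hr b ⟨ha.trans hab, hbT⟩)
    have ha' := (hweak r hr a ⟨ha, (hab.trans hbT)⟩)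
    rw [hb.2, ha'.2]
    have h3 := intervalIntegral.integral_interval_sub_left hb.1 ha'.1
    linarith [h3]
  -- integrability in s of the Lfull integrand, with bound
  set K₁ : ℝ := Kv + C * Kg + k * C * Kg with hK₁def
  have hK₁0 : 0 ≤ K₁ := by positivity
  have Lbound : ∀ u ∈ Icc (0:ℝ) T, ∀ r ∈ Icc (0:ℝ) T, ∀ s,
      |Lfull hω.le h n (S u) (fun s => g s r) (fun s => gv s r) s| ≤ K₁ := by
    intro u hu r hr s
    have hb := hbd (S u) (hSfin' u) s
    have habs : |h (S u) s| ≤ C := abs_le.mpr ⟨by linarith [hb.1], hb.2⟩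
    have h2 : |h (S u) s * g s r| ≤ C * Kg := by
      rw [abs_mul]
      exact mul_le_mul habs (hKg s r hr) (abs_nonneg _) hC
    have h3 : |∑ i : Fin k, g (i, ageZero hω.le) r * n i (S u) s| ≤ k * C * Kg := by
      have h4 : ∀ i : Fin k, |g (i, ageZero hω.le) r * n i (S u) s| ≤ Kg * C := by
        intro i
        rw [abs_mul]
        have hni := nbd i (S u) (hSfin' u) s
        exact mul_le_mul (hKg _ r hr) (abs_le.mpr ⟨by linarith [hni.1], hni.2⟩)
          (abs_nonneg _) hKg0
      calc |∑ i : Fin k, g (i, ageZero hω.le) r * n i (S u) s|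
          ≤ ∑ i : Fin k, |g (i, ageZero hω.le) r * n i (S u) s| :=
            Finset.abs_sum_le_sum_abs _ _
        _ ≤ ∑ _i : Fin k, Kg * C := Finset.sum_le_sum (fun i _ => h4 i)
        _ = k * (Kg * C) := by
            rw [Finset.sum_const, Finset.card_univ, Fintype.card_fin, nsmul_eq_mul]
        _ = k * C * Kg := by ring
    have tri : |gv s r - h (S u) s * g s r + ∑ i : Fin k, g (i, ageZero hω.le) r * n i (S u) s|
        ≤ |gv s r| + |h (S u) s * g s r| +
          |∑ i : Fin k, g (i, ageZero hω.le) r * n i (S u) s| := by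
      calc |gv s r - h (S u) s * g s r + ∑ i : Fin k, g (i, ageZero hω.le) r * n i (S u) s|
          ≤ |gv s r - h (S u) s * g s r| +
            |∑ i : Fin k, g (i, ageZero hω.le) r * n i (S u) s| := abs_add_le _ _
        _ ≤ _ := by
            have := abs_sub (gv s r) (h (S u) s * g s r)
            linarith
    have hKs := hKv s r hr
    simp only [Lfull]
    rw [hK₁def]
    calc |gv s r - h (S u) s * g s r + ∑ i : Fin k, g (i, ageZero hω.le) r * n i (S u) s|
        ≤ |gv s r| + |h (S u) s * g s r| +
          |∑ i : Fin k, g (i, ageZero hω.le) r * n i (S u) s| := tri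
      _ ≤ Kv + C * Kg + k * C * Kg := by linarith
  have Lmeas : ∀ u ∈ Icc (0:ℝ) T, ∀ r ∈ Icc (0:ℝ) T,
      Integrable (fun s => Lfull hω.le h n (S u) (fun s => g s r) (fun s => gv s r) s) (S u) := by
    intro u hu r hr
    apply int_bdd _ (hSfin' u) _ ?_ K₁ (Lbound u hu r hr)
    have m1 : Measurable fun s => gv s r := (sec_gv r hr).measurable
    have m2 : Measurable fun s => h (S u) s * g s r :=
      (hmeas _).mul (sec_g r hr).measurable
    have m3 : Measurable fun s => ∑ i : Fin k, g (i, ageZero hω.le) r * n i (S u) s :=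
      Finset.measurable_sum _ (fun i _ => measurable_const.mul (nmeas i _))
    exact (((m1.sub m2).add m3).aestronglyMeasurable :)
  have ψbound : ∀ u ∈ Icc (0:ℝ) T, ∀ r ∈ Icc (0:ℝ) T, |ψ r u| ≤ K₁ * M := by
    intro u hu r hr
    have h1 : ‖∫ s, Lfull hω.le h n (S u) (fun s => g s r) (fun s => gv s r) s ∂ S u‖ ≤
        K₁ * ((S u) univ).toReal :=
      norm_integral_le_of_norm_le_const (ae_of_all _ fun s => by
        simpa [Real.norm_eq_abs] using Lbound u hu r hr s)
    have h2 : |ψ r u| ≤ K₁ * ((S u) univ).toReal := by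
      simpa [hψdef, Real.norm_eq_abs] using h1
    have h3 := hM u hu
    nlinarith
  -- difference estimate
  have diffest : ∀ u ∈ Icc (0:ℝ) T, ∀ r ∈ Icc (0:ℝ) T, ∀ εv εg : ℝ,
      (∀ s, |gv s r - gv s u| ≤ εv) → (∀ s, |g s r - g s u| ≤ εg) →
      |ψ r u - P u| ≤ (εv + C * εg + k * C * εg) * M := by
    intro u hu r hr εv εg hεv hεg
    have e1 : ψ r u - P u = ∫ s,
        (Lfull hω.le h n (S u) (fun s => g s r) (fun s => gv s r) s -
         Lfull hω.le h n (S u) (fun s => g s u) (fun s => gv s u) s) ∂ S u :=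
      (integral_sub (Lmeas u hu r hr) (Lmeas u hu u hu)).symm
    have ed : ∀ s : SS k ω,
        Lfull hω.le h n (S u) (fun s => g s r) (fun s => gv s r) s -
          Lfull hω.le h n (S u) (fun s => g s u) (fun s => gv s u) s =
        (gv s r - gv s u) - h (S u) s * (g s r - g s u) +
          ∑ i : Fin k, (g (i, ageZero hω.le) r - g (i, ageZero hω.le) u) * n i (S u) s := by
      intro s
      simp only [Lfull, sub_mul, Finset.sum_sub_distrib]
      ring
    have ptb : ∀ s : SS k ω,
        |Lfull hω.le h n (S u) (fun s => g s r) (fun s => gv s r) s -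
          Lfull hω.le h n (S u) (fun s => g s u) (fun s => gv s u) s|
        ≤ εv + C * εg + k * C * εg := by
      intro s
      rw [ed s]
      have hb := hbd (S u) (hSfin' u) s
      have habs : |h (S u) s| ≤ C := abs_le.mpr ⟨by linarith [hb.1], hb.2⟩
      have h2 : |h (S u) s * (g s r - g s u)| ≤ C * εg := by
        rw [abs_mul]
        exact mul_le_mul habs (hεg s) (abs_nonneg _) hC
      have h3 : |∑ i : Fin k, (g (i, ageZero hω.le) r - g (i, ageZero hω.le) u) * n i (S u) s|
          ≤ k * C * εg := by
        have hεg0 : 0 ≤ εg := le_trans (abs_nonneg _) (hεg (Classical.arbitrary _))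
        have h4 : ∀ i : Fin k,
            |(g (i, ageZero hω.le) r - g (i, ageZero hω.le) u) * n i (S u) s| ≤ εg * C := by
          intro i
          rw [abs_mul]
          have hni := nbd i (S u) (hSfin' u) s
          exact mul_le_mul (hεg _) (abs_le.mpr ⟨by linarith [hni.1], hni.2⟩)
            (abs_nonneg _) hεg0
        calc |∑ i : Fin k, (g (i, ageZero hω.le) r - g (i, ageZero hω.le) u) * n i (S u) s|
            ≤ ∑ i : Fin k, |(g (i, ageZero hω.le) r - g (i, ageZero hω.le) u) * n i (S u) s| :=
              Finset.abs_sum_le_sum_abs _ _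
          _ ≤ ∑ _i : Fin k, εg * C := Finset.sum_le_sum (fun i _ => h4 i)
          _ = k * (εg * C) := by
              rw [Finset.sum_const, Finset.card_univ, Fintype.card_fin, nsmul_eq_mul]
          _ = k * C * εg := by ring
      have tri := abs_add_le ((gv s r - gv s u) - h (S u) s * (g s r - g s u))
        (∑ i : Fin k, (g (i, ageZero hω.le) r - g (i, ageZero hω.le) u) * n i (S u) s)
      have tri2 := abs_sub (gv s r - gv s u) (h (S u) s * (g s r - g s u))
      have h5 := hεv s
      linarith
    rw [e1]
    have h6 : ‖∫ s,
        (Lfull hω.le h n (S u) (fun s => g s r) (fun s => gv s r) s -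
         Lfull hω.le h n (S u) (fun s => g s u) (fun s => gv s u) s) ∂ S u‖ ≤
        (εv + C * εg + k * C * εg) * ((S u) univ).toReal :=
      norm_integral_le_of_norm_le_const (ae_of_all _ fun s => by
        simpa [Real.norm_eq_abs] using ptb s)
    have h7 := hM u hu
    have h8 : (0:ℝ) ≤ εv + C * εg + k * C * εg := by
      have hεg0 : 0 ≤ εg := le_trans (abs_nonneg _) (hεg (Classical.arbitrary _))
      have hεv0 : 0 ≤ εv := le_trans (abs_nonneg _) (hεv (Classical.arbitrary _))
      positivity
    rw [Real.norm_eq_abs] at h6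
    nlinarith
  -- gt integrability and bound for p and Q
  have pbound : ∀ r ∈ Icc (0:ℝ) T, ∀ u, |p r u| ≤ Kt * M := by
    intro r hr u
    have h1 : ‖∫ s, gtE s u ∂ S r‖ ≤ Kt * ((S r) univ).toReal :=
      norm_integral_le_of_norm_le_const (ae_of_all _ fun s => by
        simpa [Real.norm_eq_abs] using hKtE s u)
    have h2 : |p r u| ≤ Kt * ((S r) univ).toReal := by
      simpa [hpdef, Real.norm_eq_abs] using h1
    have h3 := hM r hr
    nlinarith
  have hp_cont : ∀ r : ℝ, Continuous (p r) := by
    intro r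
    apply continuous_of_dominated (bound := fun _ => Kt)
    · exact fun u => (sec_gtE u).aestronglyMeasurable
    · exact fun u => ae_of_all _ fun s => by simpa [Real.norm_eq_abs] using hKtE s u
    · exact integrable_const _
    · exact ae_of_all _ fun s => sec_gtE' s
  -- step 2 : FTC + Fubini
  have step2 : ∀ a b : ℝ, 0 ≤ a → a ≤ b → b ≤ T →
      (∫ s, g s b ∂ S a) - (∫ s, g s a ∂ S a) = ∫ u in a..b, p a u := by
    intro a b ha hab hbT
    have hicc : Icc a b ⊆ Icc (0:ℝ) T := Icc_subset_Icc ha hbT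
    have haI : a ∈ Icc (0:ℝ) T := ⟨ha, hab.trans hbT⟩
    have hbI : b ∈ Icc (0:ℝ) T := ⟨ha.trans hab, hbT⟩
    haveI : IsFiniteMeasure (volume.restrict (Ioc a b)) := by
      constructor
      rw [Measure.restrict_apply_univ]
      exact measure_Ioc_lt_top
    have ftc : ∀ s : SS k ω, g s b - g s a = ∫ u in a..b, gtE s u := by
      intro s
      refine (intervalIntegral.integral_eq_sub_of_hasDeriv_right_of_le hab
        ((time_g s).mono hicc) ?_ ((sec_gtE' s).intervalIntegrable _ _)).symm
      intro x hx
      have hx' : x ∈ Icc (0:ℝ) T := hicc ⟨hx.1.le, hx.2.le⟩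
      have hd := hgt s x hx'
      have hmem : Icc (0:ℝ) T ∈ nhdsWithin x (Ioi x) :=
        Icc_mem_nhdsGT_of_mem ⟨hx'.1, lt_of_lt_of_le hx.2 hbT⟩
      rw [gtE_eq s x hx']
      exact hd.mono_of_mem_nhdsWithin hmem
    have igb : Integrable (fun s => g s b) (S a) :=
      int_bdd _ (hSfin' a) _ (sec_g b hbI).aestronglyMeasurable Kg (fun s => hKg s b hbI)
    have iga : Integrable (fun s => g s a) (S a) :=
      int_bdd _ (hSfin' a) _ (sec_g a haI).aestronglyMeasurable Kg (fun s => hKg s a haI)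
    rw [← integral_sub igb iga]
    have hfub : Integrable (Function.uncurry fun s u => gtE s u)
        ((S a).prod (volume.restrict (Ioc a b))) := by
      refine ⟨(hgtE_cont.aestronglyMeasurable :), ?_⟩
      exact HasFiniteIntegral.of_bounded (C := Kt)
        (ae_of_all _ fun q => by simpa [Real.norm_eq_abs, Function.uncurry] using hKtE q.1 q.2)
    calc ∫ s, (g s b - g s a) ∂ S a
        = ∫ s, (∫ u in Ioc a b, gtE s u) ∂ S a := by
          apply integral_congr_ae
          apply ae_of_all
          intro s
          show g s b - g s a = ∫ u in Ioc a b, gtE s u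
          rw [ftc s, intervalIntegral.integral_of_le hab]
      _ = ∫ u in Ioc a b, (∫ s, gtE s u ∂ S a) := integral_integral_swap hfub
      _ = ∫ u in a..b, p a u := by
          rw [intervalIntegral.integral_of_le hab]
  -- the partition
  set A : ℕ → ℕ → ℝ := fun N l => l * t / N with hAdef
  have hA0 : ∀ N, A N 0 = 0 := by intro N; simp [hAdef]
  have hAN : ∀ N : ℕ, 0 < N → A N N = t := by
    intro N hN
    have : (N:ℝ) ≠ 0 := by exact_mod_cast hN.ne'
    simp only [hAdef]
    field_simp
  have hAmono : ∀ N : ℕ, ∀ l : ℕ, A N l ≤ A N (l + 1) := by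
    intro N l
    rcases Nat.eq_zero_or_pos N with h0 | hN
    · simp [hAdef, h0]
    · apply div_le_div_of_nonneg_right _ (by positivity)
      push_cast
      nlinarith [ht0.le]
  have hAnonneg : ∀ N l, 0 ≤ A N l := by
    intro N l
    apply div_nonneg (by positivity) (by positivity)
  have hAle : ∀ N : ℕ, 0 < N → ∀ l : ℕ, l ≤ N → A N l ≤ t := by
    intro N hN l hl
    rw [hAdef]
    rw [div_le_iff₀ (by exact_mod_cast hN)]
    have : (l:ℝ) ≤ (N:ℝ) := by exact_mod_cast hl
    nlinarith [ht0.le]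
  have hAdiff : ∀ N : ℕ, 0 < N → ∀ l : ℕ, A N (l+1) - A N l ≤ t / N := by
    intro N hN l
    have hN' : (0:ℝ) < N := by exact_mod_cast hN
    rw [hAdef]
    rw [div_sub_div_same]
    apply div_le_div_of_nonneg_right _ (by positivity)
    push_cast
    nlinarith [ht0.le]
  -- the location of u in the partition
  have loc : ∀ N : ℕ, 0 < N → ∀ u ∈ Ioc (0:ℝ) t, ∃ l : ℕ, l < N ∧
      u ∈ Ioc (A N l) (A N (l+1)) ∧ ∀ j : ℕ, j < N → u ∈ Ioc (A N j) (A N (j+1)) → j = l := by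
    intro N hN u hu
    have hN' : (0:ℝ) < N := by exact_mod_cast hN
    set x : ℝ := u * N / t with hx
    have hx0 : 0 < x := div_pos (mul_pos hu.1 hN') ht0
    have hxN : x ≤ N := by
      rw [hx, div_le_iff₀ ht0]
      nlinarith [hu.2]
    have e1 : ∀ j : ℕ, (A N j < u ↔ (j:ℝ) < x) := by
      intro j
      simp only [hAdef]
      rw [div_lt_iff₀ hN', hx, lt_div_iff₀ ht0]
    have e2 : ∀ j : ℕ, (u ≤ A N j ↔ x ≤ (j:ℝ)) := by
      intro j
      simp only [hAdef]
      rw [le_div_iff₀ hN', hx, div_le_iff₀ ht0]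
    have hz1 : 1 ≤ ⌈x⌉ := Int.ceil_pos.mpr hx0
    have hzN : ⌈x⌉ ≤ (N:ℤ) := Int.ceil_le.mpr (by exact_mod_cast hxN)
    set l : ℕ := ⌈x⌉.toNat - 1 with hl
    have hlz : (l:ℤ) + 1 = ⌈x⌉ := by omega
    have hlN : l < N := by omega
    have hmem : u ∈ Ioc (A N l) (A N (l+1)) := by
      constructor
      · rw [e1]
        have h2 := Int.ceil_lt_add_one x
        have h3 : ((l:ℝ) + 1) = ((⌈x⌉ : ℤ) : ℝ) := by exact_mod_cast hlz
        linarith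
      · rw [e2]
        have h2 := Int.le_ceil x
        have h3 : ((l:ℝ) + 1) = ((⌈x⌉ : ℤ) : ℝ) := by exact_mod_cast hlz
        push_cast
        linarith
    refine ⟨l, hlN, hmem, ?_⟩
    intro j hjN hj
    have hj1 : (j:ℝ) < x := (e1 j).mp hj.1
    have hj2 : x ≤ (j:ℝ) + 1 := by
      have := (e2 (j+1)).mp hj.2
      push_cast at this
      linarith
    have hl1 : (l:ℝ) < x := (e1 l).mp hmem.1
    have hl2 : x ≤ (l:ℝ) + 1 := by
      have := (e2 (l+1)).mp hmem.2
      push_cast at this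
      linarith
    have c1 : (j:ℝ) < (l:ℝ) + 1 := lt_of_lt_of_le hj1 hl2
    have c2 : (l:ℝ) < (j:ℝ) + 1 := lt_of_lt_of_le hl1 hj2
    have c1' : j < l + 1 := by exact_mod_cast c1
    have c2' : l < j + 1 := by exact_mod_cast c2
    omega
  -- the approximating sequences
  set F : ℕ → ℝ → ℝ := fun N u =>
    ∑ l ∈ Finset.range N, (Ioc (A N l) (A N (l+1))).indicator (ψ (A N (l+1))) u with hFdef
  set G : ℕ → ℝ → ℝ := fun N u =>
    ∑ l ∈ Finset.range N, (Ioc (A N l) (A N (l+1))).indicator (p (A N l)) u with hGdef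
  have Fval : ∀ N : ℕ, 0 < N → ∀ u ∈ Ioc (0:ℝ) t, ∀ l : ℕ, l < N →
      u ∈ Ioc (A N l) (A N (l+1)) →
      F N u = ψ (A N (l+1)) u ∧ G N u = p (A N l) u := by
    intro N hN u hu l hlN hmem
    obtain ⟨l', hl'N, hmem', huniq⟩ := loc N hN u hu
    have hll : l = l' := huniq l hlN hmem
    subst hll
    have hother : ∀ j ∈ Finset.range N, j ≠ l →
        ∀ (q : ℝ → ℝ), (Ioc (A N j) (A N (j+1))).indicator q u = 0 := by
      intro j hj hne q
      apply indicator_of_notMem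
      intro hmemj
      exact hne (huniq j (Finset.mem_range.mp hj) hmemj)
    constructor
    · show (∑ j ∈ Finset.range N, (Ioc (A N j) (A N (j+1))).indicator (ψ (A N (j+1))) u) = _
      rw [Finset.sum_eq_single_of_mem l (Finset.mem_range.mpr hlN)
        (fun j hj hne => hother j hj hne _)]
      exact indicator_of_mem hmem _
    · show (∑ j ∈ Finset.range N, (Ioc (A N j) (A N (j+1))).indicator (p (A N j)) u) = _
      rw [Finset.sum_eq_single_of_mem l (Finset.mem_range.mpr hlN)
        (fun j hj hne => hother j hj hne _)]
      exact indicator_of_mem hmem _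
  -- the key identity
  have key : ∀ N : ℕ, 0 < N →
      φ t - φ 0 = (∫ u in Ioc (0:ℝ) t, F N u) + (∫ u in Ioc (0:ℝ) t, G N u) := by
    intro N hN
    have h0T : ∀ l : ℕ, l ≤ N → A N l ∈ Icc (0:ℝ) T := fun l hl =>
      ⟨hAnonneg N l, (hAle N hN l hl).trans htT⟩
    have hsub : ∀ l : ℕ, l < N → Ioc (A N l) (A N (l+1)) ⊆ Ioc (0:ℝ) t :=
      fun l hl => Ioc_subset_Ioc (hAnonneg N l) (hAle N hN (l+1) hl)
    have tele : φ t - φ 0 = ∑ l ∈ Finset.range N, (φ (A N (l+1)) - φ (A N l)) := by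
      rw [Finset.sum_range_sub (fun l => φ (A N l)) N, hAN N hN, hA0 N]
    have inc : ∀ l ∈ Finset.range N, φ (A N (l+1)) - φ (A N l) =
        (∫ u in (A N l)..(A N (l+1)), ψ (A N (l+1)) u) +
        (∫ u in (A N l)..(A N (l+1)), p (A N l) u) := by
      intro l hl
      have hlN := Finset.mem_range.mp hl
      have ha := hAnonneg N l
      have hab := hAmono N l
      have hbT : A N (l+1) ≤ T := (hAle N hN (l+1) hlN).trans htT
      have i1 := incr (A N (l+1)) (h0T (l+1) hlN) (A N l) (A N (l+1)) ha hab hbT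
      have i2 := step2 (A N l) (A N (l+1)) ha hab hbT
      have hφ1 : φ (A N (l+1)) = ∫ s, g s (A N (l+1)) ∂ S (A N (l+1)) := rfl
      have hφ2 : φ (A N l) = ∫ s, g s (A N l) ∂ S (A N l) := rfl
      rw [hφ1, hφ2]
      linarith
    have eF : (∫ u in Ioc (0:ℝ) t, F N u) =
        ∑ l ∈ Finset.range N, ∫ u in (A N l)..(A N (l+1)), ψ (A N (l+1)) u := by
      have eint : ∀ l ∈ Finset.range N, Integrable
          ((Ioc (A N l) (A N (l+1))).indicator (ψ (A N (l+1))))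
          (volume.restrict (Ioc (0:ℝ) t)) := by
        intro l hl
        have hlN := Finset.mem_range.mp hl
        rw [integrable_indicator_iff measurableSet_Ioc]
        have hbase : IntegrableOn (ψ (A N (l+1))) (Ioc (A N l) (A N (l+1))) volume :=
          (ψint _ (h0T (l+1) hlN)).mono_set
            (Ioc_subset_Ioc (hAnonneg N l) ((hAle N hN (l+1) hlN).trans htT))
        unfold IntegrableOn
        rw [Measure.restrict_restrict measurableSet_Ioc, inter_eq_left.mpr (hsub l hlN)]
        exact hbase
      calc (∫ u in Ioc (0:ℝ) t, F N u)
          = ∑ l ∈ Finset.range N, ∫ u in Ioc (0:ℝ) t,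
              (Ioc (A N l) (A N (l+1))).indicator (ψ (A N (l+1))) u :=
            integral_finset_sum _ eint
        _ = ∑ l ∈ Finset.range N, ∫ u in (A N l)..(A N (l+1)), ψ (A N (l+1)) u := by
            apply Finset.sum_congr rfl
            intro l hl
            have hlN := Finset.mem_range.mp hl
            rw [integral_indicator measurableSet_Ioc,
              Measure.restrict_restrict measurableSet_Ioc, inter_eq_left.mpr (hsub l hlN),
              intervalIntegral.integral_of_le (hAmono N l)]
    have eG : (∫ u in Ioc (0:ℝ) t, G N u) =
        ∑ l ∈ Finset.range N, ∫ u in (A N l)..(A N (l+1)), p (A N l) u := by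
      have eint : ∀ l ∈ Finset.range N, Integrable
          ((Ioc (A N l) (A N (l+1))).indicator (p (A N l)))
          (volume.restrict (Ioc (0:ℝ) t)) := by
        intro l hl
        have hlN := Finset.mem_range.mp hl
        rw [integrable_indicator_iff measurableSet_Ioc]
        have hbase : IntegrableOn (p (A N l)) (Ioc (A N l) (A N (l+1))) volume :=
          (hp_cont (A N l)).integrableOn_Ioc
        unfold IntegrableOn
        rw [Measure.restrict_restrict measurableSet_Ioc, inter_eq_left.mpr (hsub l hlN)]
        exact hbase
      calc (∫ u in Ioc (0:ℝ) t, G N u)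
          = ∑ l ∈ Finset.range N, ∫ u in Ioc (0:ℝ) t,
              (Ioc (A N l) (A N (l+1))).indicator (p (A N l)) u :=
            integral_finset_sum _ eint
        _ = ∑ l ∈ Finset.range N, ∫ u in (A N l)..(A N (l+1)), p (A N l) u := by
            apply Finset.sum_congr rfl
            intro l hl
            have hlN := Finset.mem_range.mp hl
            rw [integral_indicator measurableSet_Ioc,
              Measure.restrict_restrict measurableSet_Ioc, inter_eq_left.mpr (hsub l hlN),
              intervalIntegral.integral_of_le (hAmono N l)]
    rw [tele, eF, eG, ← Finset.sum_add_distrib]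
    exact Finset.sum_congr rfl inc
  -- membership lemmas
  have hsub1 : Ioc (0:ℝ) t ⊆ Icc (0:ℝ) T := fun u hu => ⟨hu.1.le, hu.2.trans htT⟩
  have hAmem : ∀ N : ℕ, 0 < N → ∀ l : ℕ, l ≤ N → A N l ∈ Icc (0:ℝ) T :=
    fun N hN l hl => ⟨hAnonneg N l, (hAle N hN l hl).trans htT⟩
  -- a.e. measurability of F N and G N on [0,t]
  have Fmeas : ∀ N : ℕ, AEStronglyMeasurable (F N) (volume.restrict (Ioc (0:ℝ) t)) := by
    intro N
    show AEStronglyMeasurable (fun u => ∑ l ∈ Finset.range N,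
      (Ioc (A N l) (A N (l+1))).indicator (ψ (A N (l+1))) u) (volume.restrict (Ioc (0:ℝ) t))
    apply Finset.aestronglyMeasurable_fun_sum
    intro l hl
    have hlN := Finset.mem_range.mp hl
    have hN : 0 < N := by omega
    have base : AEStronglyMeasurable (ψ (A N (l+1))) (volume.restrict (Ioc (0:ℝ) t)) := by
      have h1 := (ψint _ (hAmem N hN (l+1) hlN)).aestronglyMeasurable
      exact h1.mono_measure (Measure.restrict_mono (Ioc_subset_Ioc_right htT) le_rfl)
    exact base.indicator measurableSet_Ioc
  have Gmeas : ∀ N : ℕ, AEStronglyMeasurable (G N) (volume.restrict (Ioc (0:ℝ) t)) := by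
    intro N
    show AEStronglyMeasurable (fun u => ∑ l ∈ Finset.range N,
      (Ioc (A N l) (A N (l+1))).indicator (p (A N l)) u) (volume.restrict (Ioc (0:ℝ) t))
    apply Finset.aestronglyMeasurable_fun_sum
    intro l _hl
    exact (hp_cont (A N l)).aestronglyMeasurable.indicator measurableSet_Ioc
  -- pointwise limits
  have Flim : ∀ u ∈ Ioc (0:ℝ) t, Tendsto (fun N => F N u) atTop (nhds (P u)) := by
    intro u hu
    have huI : u ∈ Icc (0:ℝ) T := hsub1 hu
    rw [Metric.tendsto_atTop]
    intro ε hε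
    set B : ℝ := ε / (3 * (M + 1)) with hB
    have hB0 : 0 < B := by positivity
    set εg : ℝ := B / (C + k * C + 1) with hεgd
    have hεg0 : 0 < εg := by positivity
    obtain ⟨δv, hδv0, hδv⟩ := unif gv hgv_cont B hB0
    obtain ⟨δg, hδg0, hδg⟩ := unif g hg_cont εg hεg0
    set δ : ℝ := min δv δg with hδd
    have hδ0 : 0 < δ := lt_min hδv0 hδg0
    obtain ⟨N₀, hN₀⟩ := Metric.tendsto_atTop.mp (tendsto_const_div_atTop_nhds_zero_nat t) δ hδ0
    refine ⟨max N₀ 1, fun N hN => ?_⟩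
    have hN1 : 0 < N := le_trans (le_max_right _ _) hN
    have hNδ : t / N < δ := by
      have h1 := hN₀ N (le_trans (le_max_left _ _) hN)
      rwa [Real.dist_eq, sub_zero, abs_of_nonneg (by positivity)] at h1
    obtain ⟨l, hlN, hmem, _⟩ := loc N hN1 u hu
    rw [(Fval N hN1 u hu l hlN hmem).1]
    have hrI : A N (l+1) ∈ Icc (0:ℝ) T := hAmem N hN1 (l+1) hlN
    have hru : |A N (l+1) - u| < δ := by
      have h2 : u ≤ A N (l+1) := hmem.2
      have h3 : A N l < u := hmem.1
      have h4 := hAdiff N hN1 l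
      rw [abs_of_nonneg (by linarith)]
      linarith
    have ev : ∀ s, |gv s (A N (l+1)) - gv s u| ≤ B := fun s =>
      (hδv s (A N (l+1)) hrI u huI (lt_of_lt_of_le hru (min_le_left _ _))).le
    have eg : ∀ s, |g s (A N (l+1)) - g s u| ≤ εg := fun s =>
      (hδg s (A N (l+1)) hrI u huI (lt_of_lt_of_le hru (min_le_right _ _))).le
    have hd := diffest u huI (A N (l+1)) hrI B εg ev eg
    rw [Real.dist_eq]
    have hD : (0:ℝ) < C + k * C + 1 := by positivity
    have hcan : εg * (C + k * C + 1) = B := div_mul_cancel₀ _ hD.ne'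
    have hcore : C * εg + ↑k * C * εg ≤ B := by nlinarith [hεg0.le]
    have hbig : (B + C * εg + ↑k * C * εg) * M ≤ 2 * B * M := by nlinarith [hB0.le, hM0]
    have hcanB : B * (3 * (M + 1)) = ε := div_mul_cancel₀ _ (by positivity)
    have h2B : 2 * B * M < ε := by nlinarith [hB0, hM0]
    linarith
  have Glim : ∀ u ∈ Ioc (0:ℝ) t, Tendsto (fun N => G N u) atTop (nhds (Q u)) := by
    intro u hu
    have huI : u ∈ Icc (0:ℝ) T := hsub1 hu
    have hqc := (hScont (fun s => gtE s u) (sec_gtE u)) u huI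
    rw [Metric.tendsto_atTop]
    intro ε hε
    obtain ⟨δ, hδ0, hδ⟩ := Metric.continuousWithinAt_iff.mp hqc ε hε
    obtain ⟨N₀, hN₀⟩ := Metric.tendsto_atTop.mp (tendsto_const_div_atTop_nhds_zero_nat t) δ hδ0
    refine ⟨max N₀ 1, fun N hN => ?_⟩
    have hN1 : 0 < N := le_trans (le_max_right _ _) hN
    have hNδ : t / N < δ := by
      have h1 := hN₀ N (le_trans (le_max_left _ _) hN)
      rwa [Real.dist_eq, sub_zero, abs_of_nonneg (by positivity)] at h1
    obtain ⟨l, hlN, hmem, _⟩ := loc N hN1 u hu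
    rw [(Fval N hN1 u hu l hlN hmem).2]
    have hm : A N l ∈ Icc (0:ℝ) T := hAmem N hN1 l hlN.le
    have hd : dist (A N l) u < δ := by
      rw [Real.dist_eq]
      have h2 : u ≤ A N (l+1) := hmem.2
      have h3 : A N l < u := hmem.1
      have h4 := hAdiff N hN1 l
      rw [abs_of_nonpos (by linarith)]
      linarith
    exact hδ hm hd
  -- pointwise bounds
  have Fbd : ∀ N : ℕ, ∀ u ∈ Ioc (0:ℝ) t, |F N u| ≤ K₁ * M := by
    intro N u hu
    rcases Nat.eq_zero_or_pos N with rfl | hN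
    · have : F 0 u = 0 := by simp [hFdef]
      rw [this]
      simpa using mul_nonneg hK₁0 hM0
    · obtain ⟨l, hlN, hmem, _⟩ := loc N hN u hu
      rw [(Fval N hN u hu l hlN hmem).1]
      exact ψbound u (hsub1 hu) (A N (l+1)) (hAmem N hN (l+1) hlN)
  have Gbd : ∀ N : ℕ, ∀ u ∈ Ioc (0:ℝ) t, |G N u| ≤ Kt * M := by
    intro N u hu
    rcases Nat.eq_zero_or_pos N with rfl | hN
    · have : G 0 u = 0 := by simp [hGdef]
      rw [this]
      simpa using mul_nonneg hKt0 hM0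
    · obtain ⟨l, hlN, hmem, _⟩ := loc N hN u hu
      rw [(Fval N hN u hu l hlN hmem).2]
      exact pbound (A N l) (hAmem N hN l hlN.le) u
  -- dominated convergence
  have tendA : Tendsto (fun N => ∫ u in Ioc (0:ℝ) t, F N u) atTop
      (nhds (∫ u in Ioc (0:ℝ) t, P u)) := by
    apply tendsto_integral_of_dominated_convergence (bound := fun _ => K₁ * M) Fmeas
      (integrable_const _)
    · intro N
      rw [ae_restrict_iff' measurableSet_Ioc]
      exact ae_of_all _ fun u hu => by simpa [Real.norm_eq_abs] using Fbd N u hu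
    · rw [ae_restrict_iff' measurableSet_Ioc]
      exact ae_of_all _ Flim
  have tendB : Tendsto (fun N => ∫ u in Ioc (0:ℝ) t, G N u) atTop
      (nhds (∫ u in Ioc (0:ℝ) t, Q u)) := by
    apply tendsto_integral_of_dominated_convergence (bound := fun _ => Kt * M) Gmeas
      (integrable_const _)
    · intro N
      rw [ae_restrict_iff' measurableSet_Ioc]
      exact ae_of_all _ fun u hu => by simpa [Real.norm_eq_abs] using Gbd N u hu
    · rw [ae_restrict_iff' measurableSet_Ioc]
      exact ae_of_all _ Glim
  -- combine
  have main : φ t - φ 0 = (∫ u in Ioc (0:ℝ) t, P u) + (∫ u in Ioc (0:ℝ) t, Q u) := by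
    have h1 : Tendsto (fun N : ℕ => (∫ u in Ioc (0:ℝ) t, F N u) + (∫ u in Ioc (0:ℝ) t, G N u))
        atTop (nhds ((∫ u in Ioc (0:ℝ) t, P u) + (∫ u in Ioc (0:ℝ) t, Q u))) := tendA.add tendB
    have h2 : Tendsto (fun _ : ℕ => φ t - φ 0) atTop
        (nhds ((∫ u in Ioc (0:ℝ) t, P u) + (∫ u in Ioc (0:ℝ) t, Q u))) := by
      apply h1.congr'
      filter_upwards [eventually_ge_atTop 1] with N hN
      exact (key N hN).symm
    exact (tendsto_nhds_unique h2 tendsto_const_nhds).symm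
  -- integrability of P and Q
  haveI : IsFiniteMeasure (volume.restrict (Ioc (0:ℝ) t)) := by
    constructor
    rw [Measure.restrict_apply_univ]
    exact measure_Ioc_lt_top
  have Pint : IntegrableOn P (Ioc (0:ℝ) t) volume := by
    have hPm : AEStronglyMeasurable P (volume.restrict (Ioc (0:ℝ) t)) :=
      aestronglyMeasurable_of_tendsto_ae atTop Fmeas
        ((ae_restrict_iff' measurableSet_Ioc).mpr (ae_of_all _ Flim))
    refine ⟨hPm, ?_⟩
    apply HasFiniteIntegral.of_bounded (C := K₁ * M)
    rw [ae_restrict_iff' measurableSet_Ioc]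
    apply ae_of_all
    intro u hu
    have hb : P u = ψ u u := rfl
    rw [Real.norm_eq_abs, hb]
    exact ψbound u (hsub1 hu) u (hsub1 hu)
  have Qint : IntegrableOn Q (Ioc (0:ℝ) t) volume := by
    have hQm : AEStronglyMeasurable Q (volume.restrict (Ioc (0:ℝ) t)) :=
      aestronglyMeasurable_of_tendsto_ae atTop Gmeas
        ((ae_restrict_iff' measurableSet_Ioc).mpr (ae_of_all _ Glim))
    refine ⟨hQm, ?_⟩
    apply HasFiniteIntegral.of_bounded (C := Kt * M)
    rw [ae_restrict_iff' measurableSet_Ioc]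
    apply ae_of_all
    intro u hu
    have hb : Q u = p u u := rfl
    rw [Real.norm_eq_abs, hb]
    exact pbound u (hsub1 hu) u
  -- final rewriting
  have final : ∀ u ∈ Ioc (0:ℝ) t,
      (∫ s, (gv s u + gt s u - h (S u) s * g s u +
        ∑ i : Fin k, g (i, ageZero hω.le) u * n i (S u) s) ∂ S u) = P u + Q u := by
    intro u hu
    have huI : u ∈ Icc (0:ℝ) T := hsub1 hu
    have i1 := Lmeas u huI u huI
    have sec_gt : Continuous (fun s => gt s u) :=
      hgt_cont.comp_continuous (continuous_id.prodMk continuous_const)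
        (fun s => ⟨mem_univ _, huI⟩)
    have i2 : Integrable (fun s => gt s u) (S u) :=
      int_bdd _ (hSfin' u) _ sec_gt.aestronglyMeasurable Kt (fun s => hKt s u huI)
    have e : ∀ s : SS k ω, gv s u + gt s u - h (S u) s * g s u +
        ∑ i : Fin k, g (i, ageZero hω.le) u * n i (S u) s
        = Lfull hω.le h n (S u) (fun s => g s u) (fun s => gv s u) s + gt s u := by
      intro s
      simp only [Lfull]
      ring
    calc (∫ s, (gv s u + gt s u - h (S u) s * g s u +
          ∑ i : Fin k, g (i, ageZero hω.le) u * n i (S u) s) ∂ S u)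
        = ∫ s, (Lfull hω.le h n (S u) (fun s => g s u) (fun s => gv s u) s + gt s u) ∂ S u :=
          integral_congr_ae (ae_of_all _ e)
      _ = (∫ s, Lfull hω.le h n (S u) (fun s => g s u) (fun s => gv s u) s ∂ S u) +
          ∫ s, gt s u ∂ S u := integral_add i1 i2
      _ = P u + Q u := by
          have hQe : Q u = ∫ s, gt s u ∂ S u :=
            integral_congr_ae (ae_of_all _ fun s => gtE_eq s u huI)
          rw [hQe]
  have goal1 : (∫ u in (0:ℝ)..t, ∫ s,
      (gv s u + gt s u - h (S u) s * g s u +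
        ∑ i : Fin k, g (i, ageZero hω.le) u * n i (S u) s) ∂ S u) =
      (∫ u in Ioc (0:ℝ) t, P u) + (∫ u in Ioc (0:ℝ) t, Q u) := by
    rw [intervalIntegral.integral_of_le ht.1]
    rw [← integral_add Pint Qint]
    exact setIntegral_congr_fun measurableSet_Ioc final
  rw [goal1]
  have hφt : φ t = ∫ s, g s t ∂ S t := rfl
  have hφ0 : φ 0 = ∫ s, g s 0 ∂ S 0 := rfl
  linarith [main]

end GeneralBranching2
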